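/- arXiv:1301.3734 — 2 statements merged into one kernel-verified Lean document; each statement's English description precedes it below -/
import Mathlib

section
/- Let r > 0 and let ψ : (0, ∞) → ℝ be an arbitrary real-valued function; set φ(s,r) = s + ψ(r). Then the function f(s) = 1/( 2φ(s,r) + 2·K_{n=1}^∞ (n²r²/φ(s,r)) ), defined for s > −ψ(r), is the unique function on (−ψ(r), ∞) tending to 0 at +∞ that satisfies the functional equation f(s) + f(s+2r) = 1/(φ(s,r) + r) for all s > −ψ(r). -/
/-! Write `x` and `y` for the values of `K(n²r²/t)` at `t = s + ψ(r)` and at `t + 2r`. The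
functional equation is equivalent to the relation `(t - r + 2x) y = 2r² - (t + 3r) x`. Substituting
the convergents `Pₙ(t)/Qₙ(t)` and `Pₙ(t+2r)/Qₙ(t+2r)` and clearing denominators gives a quantity
which the three-term recurrences evaluate to `(-1)ⁿ 2 ((n+1)! rⁿ⁺¹)²`; divided by the positive
denominators it alternates in sign and tends to the defect of the limits, which is therefore `0`.
Since `K ≥ 0`, the solution is `O(1/s)`; the difference of two solutions is antiperiodic with
period `2r` and tends to `0`, hence vanishes. -/

open Filter Real

/-- Numerators of the convergents of a generalized continued fraction with
integer part `b₀`, partial numerators `a n` and partial denominators `b n` (for `n ≥ 1`). -/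
noncomputable def cfNum (b₀ : ℝ) (a b : ℕ → ℝ) : ℕ → ℝ
  | 0 => b₀
  | 1 => b 1 * b₀ + a 1
  | n + 2 => b (n + 2) * cfNum b₀ a b (n + 1) + a (n + 2) * cfNum b₀ a b n

/-- Denominators of the convergents of a generalized continued fraction. -/
noncomputable def cfDen (a b : ℕ → ℝ) : ℕ → ℝ
  | 0 => 1
  | 1 => b 1
  | n + 2 => b (n + 2) * cfDen a b (n + 1) + a (n + 2) * cfDen a b n

/-- `IsCFLimit b₀ a b L` means: the convergents of the generalized continued fraction
`b₀ + a 1 / (b 1 + a 2 / (b 2 + ⋯))` tend to `L`. -/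
def IsCFLimit (b₀ : ℝ) (a b : ℕ → ℝ) (L : ℝ) : Prop :=
  Filter.Tendsto (fun n => cfNum b₀ a b n / cfDen a b n) Filter.atTop (nhds L)

section Convergents

variable {b₀ : ℝ} {a b : ℕ → ℝ}

theorem cfDen_pos (ha : ∀ n, 0 ≤ a n) (hb : ∀ n, 0 < b n) (n : ℕ) : 0 < cfDen a b n := by
  induction n using Nat.twoStepInduction with
  | zero => exact one_pos
  | one => exact hb 1
  | more n ih₀ ih₁ =>
    rw [cfDen]
    exact add_pos_of_pos_of_nonneg (mul_pos (hb _) ih₁) (mul_nonneg (ha _) ih₀.le)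

theorem cfNum_nonneg (h₀ : 0 ≤ b₀) (ha : ∀ n, 0 ≤ a n) (hb : ∀ n, 0 ≤ b n) (n : ℕ) :
    0 ≤ cfNum b₀ a b n := by
  induction n using Nat.twoStepInduction with
  | zero => exact h₀
  | one => exact add_nonneg (mul_nonneg (hb 1) h₀) (ha 1)
  | more n ih₀ ih₁ =>
    rw [cfNum]
    exact add_nonneg (mul_nonneg (hb _) ih₁) (mul_nonneg (ha _) ih₀)

theorem IsCFLimit.nonneg {L : ℝ} (h : IsCFLimit b₀ a b L) (h₀ : 0 ≤ b₀) (ha : ∀ n, 0 ≤ a n)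
    (hb : ∀ n, 0 < b n) : 0 ≤ L :=
  ge_of_tendsto' h fun n =>
    div_nonneg (cfNum_nonneg h₀ ha (fun n => (hb n).le) n) (cfDen_pos ha hb n).le

end Convergents

theorem eq_zero_of_tendsto_of_alternating {u : ℕ → ℝ} {L : ℝ} (hu : Tendsto u atTop (nhds L))
    (halt : ∀ n, 0 ≤ (-1) ^ n * u n) : L = 0 := by
  have hodd : StrictMono fun n : ℕ => 2 * n + 1 := fun m n h => by dsimp only; omega
  have hev : StrictMono fun n : ℕ => 2 * n := fun m n h => by dsimp only; omega
  refine le_antisymm ?_ ?_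
  · refine le_of_tendsto (hu.comp hodd.tendsto_atTop) (Eventually.of_forall fun n => ?_)
    simpa [pow_succ, pow_mul] using halt (2 * n + 1)
  · refine ge_of_tendsto (hu.comp hev.tendsto_atTop) (Eventually.of_forall fun n => ?_)
    simpa [pow_mul] using halt (2 * n)

theorem eq_zero_of_add_eq_zero_of_tendsto {h : ℝ → ℝ} {c p : ℝ} (hp : 0 < p)
    (hanti : ∀ u, c < u → h u + h (u + p) = 0) (hlim : Tendsto h atTop (nhds 0))
    {s : ℝ} (hs : c < s) : h s = 0 := by
  have habs : ∀ n : ℕ, |h (s + n * p)| = |h s| := by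
    intro n
    induction n with
    | zero => simp
    | succ n ih =>
      have hn : c < s + n * p := by
        have : 0 ≤ (n : ℝ) * p := by positivity
        linarith
      rw [Nat.cast_succ, add_one_mul, ← add_assoc, eq_neg_of_add_eq_zero_right (hanti _ hn),
        abs_neg, ih]
  have hshift : Tendsto (fun n : ℕ => s + n * p) atTop atTop :=
    tendsto_atTop_add_const_left _ s (tendsto_natCast_atTop_atTop.atTop_mul_const hp)
  have hconst : Tendsto (fun _ : ℕ => |h s|) atTop (nhds 0) := by
    simpa [habs] using (hlim.comp hshift).abs
  exact abs_eq_zero.mp (tendsto_nhds_unique tendsto_const_nhds hconst)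

theorem tendsto_one_div_add_of_nonneg {g : ℝ → ℝ} {c : ℝ} (hg : ∀ᶠ s in atTop, 0 ≤ g s) :
    Tendsto (fun s => 1 / (2 * (s + c) + 2 * g s)) atTop (nhds 0) := by
  have hlin : Tendsto (fun s => 2 * (s + c)) atTop atTop :=
    (tendsto_atTop_add_const_right _ c tendsto_id).const_mul_atTop two_pos
  have hden : Tendsto (fun s => 2 * (s + c) + 2 * g s) atTop atTop :=
    tendsto_atTop_mono' _ (hg.mono fun s hs => by linarith) hlin
  simpa only [one_div, Pi.inv_def] using hden.inv_tendsto_atTop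

namespace SqCF

variable {r t : ℝ}

noncomputable def num (r t : ℝ) : ℕ → ℝ := cfNum 0 (fun n => (n : ℝ) ^ 2 * r ^ 2) fun _ => t

noncomputable def den (r t : ℝ) : ℕ → ℝ := cfDen (fun n => (n : ℝ) ^ 2 * r ^ 2) fun _ => t

theorem num_add_two (n : ℕ) :
    num r t (n + 2) = t * num r t (n + 1) + ((n : ℝ) + 2) ^ 2 * r ^ 2 * num r t n := by
  simp only [num, cfNum]
  push_cast
  ring

theorem den_add_two (n : ℕ) :
    den r t (n + 2) = t * den r t (n + 1) + ((n : ℝ) + 2) ^ 2 * r ^ 2 * den r t n := by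
  simp only [den, cfDen]
  push_cast
  ring

theorem den_pos (ht : 0 < t) (n : ℕ) : 0 < den r t n :=
  cfDen_pos (fun _ => by positivity) (fun _ => ht) n

theorem limit_nonneg {x : ℝ} (ht : 0 < t)
    (hx : IsCFLimit 0 (fun n => (n : ℝ) ^ 2 * r ^ 2) (fun _ => t) x) : 0 ≤ x :=
  hx.nonneg le_rfl (fun _ => by positivity) fun _ => ht

/-- With `xₙ = Pₙ(t)/Qₙ(t)` and `yₘ = Pₘ(t+2r)/Qₘ(t+2r)` the convergents at `t` and `t + 2r`,
`defect r t n m = Qₙ(t) Qₘ(t+2r) (2r² - (t+3r) xₙ - (t-r+2xₙ) yₘ)`. -/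
noncomputable def defect (r t : ℝ) (n m : ℕ) : ℝ :=
  (2 * r ^ 2 * den r t n - (t + 3 * r) * num r t n) * den r (t + 2 * r) m -
    ((t - r) * den r t n + 2 * num r t n) * num r (t + 2 * r) m

theorem defect_add_two_left (n m : ℕ) :
    defect r t (n + 2) m = t * defect r t (n + 1) m + ((n : ℝ) + 2) ^ 2 * r ^ 2 * defect r t n m := by
  simp only [defect, num_add_two, den_add_two]
  ring

theorem defect_add_two_right (n m : ℕ) :
    defect r t n (m + 2) =
      (t + 2 * r) * defect r t n (m + 1) + ((m : ℝ) + 2) ^ 2 * r ^ 2 * defect r t n m := by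
  simp only [defect, num_add_two, den_add_two]
  ring

theorem defect_self_and_adjacent (n : ℕ) :
    defect r t n n = (-1) ^ n * ((n + 1).factorial : ℝ) ^ 2 * r ^ (2 * n + 2) * 2 ∧
    defect r t (n + 1) n =
      (-1) ^ n * ((n + 1).factorial : ℝ) ^ 2 * r ^ (2 * n + 2) * (t - (2 * n + 3) * r) ∧
    defect r t n (n + 1) =
      (-1) ^ n * ((n + 1).factorial : ℝ) ^ 2 * r ^ (2 * n + 2) * (t + (2 * n + 5) * r) := by
  induction n using Nat.twoStepInduction with
  | zero => refine ⟨?_, ?_, ?_⟩ <;> norm_num [defect, num, den, cfNum, cfDen] <;> ring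
  | one => refine ⟨?_, ?_, ?_⟩ <;> norm_num [defect, num, den, cfNum, cfDen, Nat.factorial] <;> ring
  | more n ih₀ ih₁ =>
    obtain ⟨hd₀, -, hr₀⟩ := ih₀
    obtain ⟨-, hl₁, hr₁⟩ := ih₁
    have hf₂ : ((n + 1 + 1).factorial : ℝ) = (n + 2) * (n + 1).factorial := by
      rw [Nat.factorial_succ]; push_cast; ring
    have hf₃ : ((n + 2 + 1).factorial : ℝ) = (n + 3) * (n + 2) * (n + 1).factorial := by
      rw [Nat.factorial_succ, Nat.factorial_succ]; push_cast; ring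
    have hdiag : defect r t (n + 2) (n + 2) =
        (-1) ^ (n + 2) * ((n + 2 + 1).factorial : ℝ) ^ 2 * r ^ (2 * (n + 2) + 2) * 2 := by
      rw [defect_add_two_left, defect_add_two_right n n, hr₁, hr₀, hd₀, hf₂, hf₃]
      push_cast; ring
    refine ⟨hdiag, ?_, ?_⟩
    · rw [show n + 2 + 1 = n + 1 + 2 from rfl, defect_add_two_left, hdiag, hr₁, hf₂, hf₃]
      push_cast; ring
    · rw [show n + 2 + 1 = n + 1 + 2 from rfl, defect_add_two_right, hdiag, hl₁, hf₂, hf₃]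
      push_cast; ring

theorem neg_one_pow_mul_defect_self (n : ℕ) :
    (-1) ^ n * defect r t n n = 2 * ((n + 1).factorial * r ^ (n + 1)) ^ 2 := by
  have hsq : ((-1 : ℝ) ^ n) ^ 2 = 1 := by rw [← pow_mul, mul_comm, pow_mul]; norm_num
  rw [(defect_self_and_adjacent n).1]
  linear_combination (2 * ((n + 1).factorial : ℝ) ^ 2 * r ^ (2 * n + 2)) * hsq

theorem limit_relation {x y : ℝ} (ht : 0 < t) (ht' : 0 < t + 2 * r)
    (hx : IsCFLimit 0 (fun n => (n : ℝ) ^ 2 * r ^ 2) (fun _ => t) x)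
    (hy : IsCFLimit 0 (fun n => (n : ℝ) ^ 2 * r ^ 2) (fun _ => t + 2 * r) y) :
    (t - r + 2 * x) * y = 2 * r ^ 2 - (t + 3 * r) * x := by
  have hx' : Tendsto (fun n => num r t n / den r t n) atTop (nhds x) := hx
  have hy' : Tendsto (fun n => num r (t + 2 * r) n / den r (t + 2 * r) n) atTop (nhds y) := hy
  have hQ (n : ℕ) : 0 < den r t n ∧ 0 < den r (t + 2 * r) n := ⟨den_pos ht n, den_pos ht' n⟩
  have hlim : Tendsto (fun n => defect r t n n / (den r t n * den r (t + 2 * r) n)) atTop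
      (nhds (2 * r ^ 2 - (t + 3 * r) * x - (t - r + 2 * x) * y)) := by
    refine ((tendsto_const_nhds.sub (hx'.const_mul _)).sub
      ((tendsto_const_nhds.add (hx'.const_mul 2)).mul hy')).congr fun n => ?_
    obtain ⟨_, _⟩ := hQ n
    field_simp
    simp only [defect]
    ring
  have := eq_zero_of_tendsto_of_alternating hlim fun n => by
    rw [mul_div_assoc', neg_one_pow_mul_defect_self]
    exact div_nonneg (by positivity) (mul_pos (hQ n).1 (hQ n).2).le
  linarith

theorem functional_equation {x y : ℝ} (ht : 0 < t) (ht' : 0 < t + 2 * r)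
    (hx : IsCFLimit 0 (fun n => (n : ℝ) ^ 2 * r ^ 2) (fun _ => t) x)
    (hy : IsCFLimit 0 (fun n => (n : ℝ) ^ 2 * r ^ 2) (fun _ => t + 2 * r) y) :
    1 / (2 * t + 2 * x) + 1 / (2 * (t + 2 * r) + 2 * y) = 1 / (t + r) := by
  have hrel := limit_relation ht ht' hx hy
  have h₁ : 0 < 2 * t + 2 * x := by linarith [limit_nonneg ht hx]
  have h₂ : 0 < 2 * (t + 2 * r) + 2 * y := by linarith [limit_nonneg ht' hy]
  rw [div_add_div _ _ h₁.ne' h₂.ne', div_eq_div_iff (mul_pos h₁ h₂).ne' (by linarith)]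
  linear_combination (-2) * hrel

end SqCF

theorem cf_functional_equation (r : ℝ) (hr : 0 < r) (ψ : ℝ → ℝ) (K : ℝ → ℝ)
    (hK : ∀ s : ℝ, -ψ r < s →
      IsCFLimit 0 (fun n => (n : ℝ) ^ 2 * r ^ 2) (fun _ => s + ψ r) (K s)) :
    (∀ s : ℝ, -ψ r < s →
        1 / (2 * (s + ψ r) + 2 * K s) +
          1 / (2 * (s + 2 * r + ψ r) + 2 * K (s + 2 * r)) = 1 / ((s + ψ r) + r)) ∧
    Tendsto (fun s : ℝ => 1 / (2 * (s + ψ r) + 2 * K s)) atTop (nhds 0) ∧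
    ∀ f : ℝ → ℝ, (∀ s : ℝ, -ψ r < s → f s + f (s + 2 * r) = 1 / ((s + ψ r) + r)) →
      Tendsto f atTop (nhds 0) →
      ∀ s : ℝ, -ψ r < s → f s = 1 / (2 * (s + ψ r) + 2 * K s) := by
  have hfe : ∀ s : ℝ, -ψ r < s →
      1 / (2 * (s + ψ r) + 2 * K s) +
        1 / (2 * (s + 2 * r + ψ r) + 2 * K (s + 2 * r)) = 1 / ((s + ψ r) + r) := by
    intro s hs
    have hshift := hK (s + 2 * r) (by linarith)
    rw [show s + 2 * r + ψ r = s + ψ r + 2 * r by ring] at hshift ⊢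
    exact SqCF.functional_equation (by linarith) (by linarith) (hK s hs) hshift
  have hlim : Tendsto (fun s : ℝ => 1 / (2 * (s + ψ r) + 2 * K s)) atTop (nhds 0) :=
    tendsto_one_div_add_of_nonneg <| (eventually_gt_atTop (-ψ r)).mono fun s hs =>
      SqCF.limit_nonneg (by linarith) (hK s hs)
  refine ⟨hfe, hlim, fun f hf hf0 s hs => sub_eq_zero.mp ?_⟩
  refine eq_zero_of_add_eq_zero_of_tendsto (h := fun u => f u - 1 / (2 * (u + ψ r) + 2 * K u))
    (by linarith : 0 < 2 * r) (fun u hu => ?_) (by simpa using hf0.sub hlim) hs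
  linarith [hf u hu, hfe u hu]
end

section
/- For every r > 1/2, the Gamma function identity 4r·(Γ((2r+1)/(4r))·Γ((4r−1)/(4r)))/(Γ(1/(4r))·Γ((2r−1)/(4r))) = 8πr·2^{1−1/r}·(Γ(1/(2r))²/Γ(1/(4r))⁴)·cot(π/(4r)) holds. -/
open Filter Real

open Real

theorem gamma_aux (x : ℝ) (hx0 : 0 < x) (hx2 : x < 1/2) (r : ℝ) (hr : r = 1/(4*x)) :
    4 * r * (Real.Gamma (1/2 + x) * Real.Gamma (1 - x)) /
        (Real.Gamma x * Real.Gamma (1/2 - x)) =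
      8 * π * r * (2 : ℝ) ^ (1 - 4*x) *
        (Real.Gamma (2*x) ^ 2 / Real.Gamma x ^ 4) *
        Real.cot (π * x) := by
  have hA : Real.Gamma x ≠ 0 := (Real.Gamma_pos_of_pos hx0).ne'
  have hB : Real.Gamma (1/2 + x) ≠ 0 := (Real.Gamma_pos_of_pos (by linarith)).ne'
  have hs : Real.sin (π * x) > 0 :=
    Real.sin_pos_of_pos_of_lt_pi (by positivity) (by nlinarith [pi_pos])
  have hc : Real.cos (π * x) > 0 := by
    apply Real.cos_pos_of_mem_Ioo
    constructor
    · nlinarith [pi_pos]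
    · nlinarith [pi_pos]
  have h1 : Real.Gamma (1 - x) = π / (Real.sin (π * x) * Real.Gamma x) := by
    have := Real.Gamma_mul_Gamma_one_sub x
    field_simp at this ⊢
    linarith [this]
  have h2 : Real.Gamma (1/2 - x) = π / (Real.cos (π * x) * Real.Gamma (1/2 + x)) := by
    have := Real.Gamma_mul_Gamma_one_sub (1/2 + x)
    have e : (1 : ℝ) - (1/2 + x) = 1/2 - x := by ring
    have e2 : π * (1/2 + x) = π * x + π / 2 := by ring
    rw [e, e2, Real.sin_add_pi_div_two] at this
    field_simp at this ⊢
    linarith [this]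
  have h3 : Real.Gamma (2*x) ^ 2 = (Real.Gamma x * Real.Gamma (1/2 + x))^2 / (2 * (2:ℝ)^(1-4*x) * π) := by
    have hd := Real.Gamma_mul_Gamma_add_half x
    have hE : Real.Gamma (2*x) ≠ 0 := (Real.Gamma_pos_of_pos (by linarith)).ne'
    have hpow : ((2:ℝ) ^ (1 - 2*x))^2 = 2 * (2:ℝ)^(1-4*x) := by
      rw [← Real.rpow_natCast ((2:ℝ)^(1-2*x)) 2, ← Real.rpow_mul (by norm_num)]
      rw [show ((1:ℝ)-2*x) * (2:ℕ) = 1 + (1-4*x) by push_cast; ring]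
      rw [Real.rpow_add (by norm_num), Real.rpow_one]
    have hsq : Real.sqrt π ^ 2 = π := Real.sq_sqrt pi_pos.le
    have : (Real.Gamma x * Real.Gamma (x + 1/2))^2
        = (Real.Gamma (2*x) * (2:ℝ)^(1-2*x) * Real.sqrt π)^2 := by rw [hd]
    rw [mul_pow, mul_pow, mul_pow, hsq, hpow, show x + 1/2 = 1/2 + x by ring] at this
    have h2p : (0:ℝ) < (2:ℝ)^(1-4*x) := Real.rpow_pos_of_pos (by norm_num) _
    rw [eq_div_iff (by positivity)]
    linear_combination -this
  rw [Real.cot_eq_cos_div_sin, h1, h2, h3]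
  have h2p : ((2:ℝ):ℝ)^(1-4*x) ≠ 0 := (Real.rpow_pos_of_pos (by norm_num) _).ne'
  field_simp
  ring


theorem gamma_identity_y_at_zero (r : ℝ) (hr : 1 / 2 < r) :
    4 * r * (Real.Gamma ((2*r + 1) / (4*r)) * Real.Gamma ((4*r - 1) / (4*r))) /
        (Real.Gamma (1 / (4*r)) * Real.Gamma ((2*r - 1) / (4*r))) =
      8 * π * r * (2 : ℝ) ^ (1 - 1 / r) *
        (Real.Gamma (1 / (2*r)) ^ 2 / Real.Gamma (1 / (4*r)) ^ 4) *
        Real.cot (π / (4*r)) := by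
  have hr0 : (0:ℝ) < r := by linarith
  have hx0 : 0 < 1/(4*r) := by positivity
  have hx2 : 1/(4*r) < 1/2 := by
    rw [div_lt_div_iff₀ (by positivity) two_pos]; linarith
  have key := gamma_aux (1/(4*r)) hx0 hx2 r (by field_simp)
  have e1 : (2*r + 1)/(4*r) = 1/2 + 1/(4*r) := by field_simp; ring
  have e2 : (4*r - 1)/(4*r) = 1 - 1/(4*r) := by field_simp
  have e3 : (2*r - 1)/(4*r) = 1/2 - 1/(4*r) := by field_simp; ring
  have e4 : 1/(2*r) = 2*(1/(4*r)) := by field_simp; ring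
  have e5 : 1 - 1/r = 1 - 4*(1/(4*r)) := by field_simp
  have e6 : π/(4*r) = π*(1/(4*r)) := by ring
  rw [e1, e2, e3, e4, e5, e6]
  exact key
end
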